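/- Let γ₁, γ₂, γ₃ be real numbers and for θ ∈ (0, π) and φ ∈ ℝ let A(θ,φ) be the symmetric 2×2 real matrix with entries a₁₁ = 4(γ₁ sin²φ + γ₂ cos²φ), a₂₂ = 4(γ₁ cot²θ cos²φ + γ₂ cot²θ sin²φ + γ₃), a₁₂ = a₂₁ = 2 cot θ · sin(2φ) · (γ₁ − γ₂). Then A(θ,φ) is positive semidefinite for every θ ∈ (0, π) and every φ ∈ ℝ if and only if γ₁ ≥ 0, γ₂ ≥ 0 and γ₃ ≥ 0. (This is the statement that the anisotropically deformed Laplacian Δ_γ = (1/4)Σₖ γₖ Xₖ² on the Bloch sphere is elliptic iff all decoherence rates are nonnegative.) -/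

import Mathlib

/-!
On the Bloch sphere `Δ_γ = ¼ Σₖ γₖ Xₖ²`, so the diffusion matrix is `Σₖ 4γₖ ξₖ ξₖᵀ`, where `ξₖ` is the
coefficient vector of the rotation field `Xₖ` in the coordinates `(θ, φ)`. Nonnegative rates therefore
give a sum of positive semidefinite rank-one matrices. Conversely, on the equator `cot θ = 0` and the
matrix is `diag (4(γ₁ sin²φ + γ₂ cos²φ), 4γ₃)`, whose diagonal at `φ = π/2` and `φ = 0` exhibits
`4γ₁`, `4γ₂` and `4γ₃`.
-/

open Real Matrix

/-- `A(θ,φ)` with `c` standing for `cot θ`. -/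
noncomputable def diffusionMatrix (γ₁ γ₂ γ₃ c φ : ℝ) : Matrix (Fin 2) (Fin 2) ℝ :=
  !![4 * (γ₁ * sin φ ^ 2 + γ₂ * cos φ ^ 2), 2 * c * sin (2 * φ) * (γ₁ - γ₂);
     2 * c * sin (2 * φ) * (γ₁ - γ₂), 4 * (γ₁ * c ^ 2 * cos φ ^ 2 + γ₂ * c ^ 2 * sin φ ^ 2 + γ₃)]

theorem diffusionMatrix_eq_sum_vecMulVec (γ₁ γ₂ γ₃ c φ : ℝ) :
    diffusionMatrix γ₁ γ₂ γ₃ c φ =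
      (4 * γ₁) • vecMulVec ![sin φ, c * cos φ] ![sin φ, c * cos φ] +
      (4 * γ₂) • vecMulVec ![cos φ, -(c * sin φ)] ![cos φ, -(c * sin φ)] +
      (4 * γ₃) • vecMulVec ![0, 1] ![0, 1] := by
  ext i j
  fin_cases i <;> fin_cases j <;>
    simp [diffusionMatrix, sin_two_mul] <;> ring

theorem posSemidef_smul_vecMulVec_self {n : Type*} [Fintype n] {t : ℝ} (ht : 0 ≤ t) (v : n → ℝ) :
    (t • vecMulVec v v).PosSemidef := by
  simpa using (posSemidef_vecMulVec_self_star v).smul ht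

theorem posSemidef_diffusionMatrix {γ₁ γ₂ γ₃ : ℝ} (h₁ : 0 ≤ γ₁) (h₂ : 0 ≤ γ₂) (h₃ : 0 ≤ γ₃)
    (c φ : ℝ) : (diffusionMatrix γ₁ γ₂ γ₃ c φ).PosSemidef := by
  rw [diffusionMatrix_eq_sum_vecMulVec]
  refine .add (.add ?_ ?_) ?_ <;> exact posSemidef_smul_vecMulVec_self (by positivity) _

theorem nonneg_of_posSemidef_diffusionMatrix_zero {γ₁ γ₂ γ₃ : ℝ}
    (h : ∀ φ, (diffusionMatrix γ₁ γ₂ γ₃ 0 φ).PosSemidef) : 0 ≤ γ₁ ∧ 0 ≤ γ₂ ∧ 0 ≤ γ₃ := by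
  have h₁ := (h (π / 2)).diag_nonneg (i := 0)
  have h₂ := (h 0).diag_nonneg (i := 0)
  have h₃ := (h 0).diag_nonneg (i := 1)
  simp only [diffusionMatrix, of_apply, cons_val', cons_val_zero, cons_val_one, empty_val',
    cons_val_fin_one, sin_pi_div_two, cos_pi_div_two, sin_zero, cos_zero] at h₁ h₂ h₃
  refine ⟨?_, ?_, ?_⟩ <;> linarith

/-- The diffusion matrix `A(θ,φ)` of the anisotropically deformed Laplacian
`Δ_γ = (1/4) Σₖ γₖ Xₖ²` on the Bloch sphere is positive semidefinite at every point
with `θ ∈ (0, π)` and `φ ∈ ℝ` if and only if all decoherence rates are nonnegative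
(ellipticity of `Δ_γ` iff `γₖ ≥ 0`). Here `cot θ = cos θ / sin θ`. -/
theorem deformed_laplacian_elliptic_iff (γ₁ γ₂ γ₃ : ℝ) :
    (∀ θ ∈ Set.Ioo (0 : ℝ) π, ∀ φ : ℝ,
      (!![4 * (γ₁ * sin φ ^ 2 + γ₂ * cos φ ^ 2),
          2 * (cos θ / sin θ) * sin (2 * φ) * (γ₁ - γ₂);
          2 * (cos θ / sin θ) * sin (2 * φ) * (γ₁ - γ₂),
          4 * (γ₁ * (cos θ / sin θ) ^ 2 * cos φ ^ 2 +
               γ₂ * (cos θ / sin θ) ^ 2 * sin φ ^ 2 + γ₃)] : Matrix (Fin 2) (Fin 2) ℝ).PosSemidef)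
    ↔ (0 ≤ γ₁ ∧ 0 ≤ γ₂ ∧ 0 ≤ γ₃) := by
  refine ⟨fun h ↦ nonneg_of_posSemidef_diffusionMatrix_zero fun φ ↦ ?_,
    fun ⟨h₁, h₂, h₃⟩ θ _ φ ↦ posSemidef_diffusionMatrix h₁ h₂ h₃ (cos θ / sin θ) φ⟩
  have hequator : π / 2 ∈ Set.Ioo (0 : ℝ) π := ⟨by positivity, by linarith [pi_pos]⟩
  simpa [diffusionMatrix, cos_pi_div_two] using h (π / 2) hequator φ
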